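/- Let k be a field of characteristic zero and K ⊆ L a field extension where K is equipped with an algebra structure over R = k⟦x_1,...,x_n⟧. Then the natural sequence 0 → Ω'_{K/k} ⊗_K L → Ω'_{L/k} → Ω_{L/K} → 0 of L-vector spaces is exact; equivalently, for every L-module M the restriction map Der'_k(L,M) → Der'_k(K,M) on special derivations is surjective. -/

import Mathlib

/-- Formal partial derivative of a multivariate power series. -/
noncomputable def pderivPS {k : Type} [Field k] {n : ℕ} (i : Fin n)
    (f : MvPowerSeries (Fin n) k) : MvPowerSeries (Fin n) k :=
  fun m => ((m i + 1 : ℕ) : k) * MvPowerSeries.coeff (R := k) (m + Finsupp.single i 1) f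

/-- A `k`-derivation on an algebra `A` over `R = k⟦x₁,…,xₙ⟧` is *special* if on `R` it
satisfies `D f = ∑ᵢ (∂f/∂xᵢ) • D xᵢ`. -/
def IsSpecial {k : Type} [Field k] {n : ℕ} {A : Type} [CommRing A]
    [Algebra k A] [Algebra (MvPowerSeries (Fin n) k) A]
    [IsScalarTower k (MvPowerSeries (Fin n) k) A]
    {M : Type} [AddCommGroup M] [Module k M] [Module A M] [IsScalarTower k A M]
    (D : Derivation k A M) : Prop :=
  ∀ f : MvPowerSeries (Fin n) k,
    D (algebraMap (MvPowerSeries (Fin n) k) A f) =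
      ∑ i : Fin n, algebraMap (MvPowerSeries (Fin n) k) A (pderivPS i f) •
        D (algebraMap (MvPowerSeries (Fin n) k) A (MvPowerSeries.X i))

/-! In characteristic zero every field extension `K ⊆ L` is formally smooth, being separable
algebraic over a purely transcendental subextension. Make the trivial square-zero extension
`L ⊕ M` a `K`-algebra through `a ↦ (a, D a)`; formal smoothness then lifts the identity of `L`
along the projection `L ⊕ M → L` to a section of the form `z ↦ (z, D' z)`, and `D'` is a
derivation extending `D`. It is special because `k⟦x⟧ → L` factors through `K`. -/

open TrivSqZeroExt

theorem Algebra.FormallySmooth.of_charZero (K L : Type*) [Field K] [Field L] [Algebra K L]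
    [CharZero K] : Algebra.FormallySmooth K L := by
  obtain ⟨s, hs⟩ := exists_isTranscendenceBasis K L
  have : CharZero L := charZero_of_injective_algebraMap (algebraMap K L).injective
  have := hs.isAlgebraic_field
  exact .of_algebraicIndependent_of_isSeparable hs.1

namespace Derivation

variable {R A B M : Type*} [CommRing R] [CommRing A] [CommRing B] [Algebra R A] [Algebra R B]
  [AddCommGroup M] [Module R M] [Module B M] [IsScalarTower R B M]

@[simps]
def toTrivSqZeroExt [Module Bᵐᵒᵖ M] [IsCentralScalar B M] [Algebra A B] [IsScalarTower R A B]
    [Module A M] [IsScalarTower A B M] (D : Derivation R A M) : A →ₐ[R] TrivSqZeroExt B M where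
  toFun a := inl (algebraMap A B a) + inr (D a)
  map_one' := by simp
  map_mul' a b := by ext <;> simp [D.leibniz, add_comm]
  map_zero' := by simp
  map_add' a b := by simp [add_add_add_comm]
  commutes' c := by simp [algebraMap_eq_inl', ← IsScalarTower.algebraMap_apply]

def ofTrivSqZeroExtSection [Module Bᵐᵒᵖ M] [IsCentralScalar B M]
    (Ψ : B →ₐ[R] TrivSqZeroExt B M) (hΨ : ∀ b, (Ψ b).fst = b) : Derivation R B M where
  toLinearMap := ((sndHom B M).restrictScalars R).comp Ψ.toLinearMap
  map_one_eq_zero' := by simp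
  leibniz' a b := by simp [hΨ, add_comm]

theorem exists_extend_of_formallySmooth [Algebra A B] [IsScalarTower R A B] [Module A M]
    [IsScalarTower A B M] [Algebra.FormallySmooth A B] (D : Derivation R A M) :
    ∃ D' : Derivation R B M, ∀ a, D' (algebraMap A B a) = D a := by
  let : Module Bᵐᵒᵖ M := Module.compHom M ((RingHom.id B).fromOpposite fun x y => .all x y)
  have : IsCentralScalar B M := ⟨fun _ _ => rfl⟩
  let : Algebra A (TrivSqZeroExt B M) := D.toTrivSqZeroExt.toAlgebra
  -- stated with `@`: `TrivSqZeroExt B M` also carries the componentwise, untwisted `A`-action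
  have : @IsScalarTower R A (TrivSqZeroExt B M) _ Algebra.toSMul Algebra.toSMul :=
    .of_algebraMap_eq fun c => (D.toTrivSqZeroExt.commutes c).symm
  let fst' : TrivSqZeroExt B M →ₐ[A] B :=
    { fstHom R B M with commutes' := fun a => by simp [RingHom.algebraMap_toAlgebra] }
  let Ψ := Algebra.FormallySmooth.liftOfSurjective (AlgHom.id A B) fst'
    (fun b => ⟨inl b, fst_inl M b⟩) ⟨2, kerIdeal_sq B M⟩
  refine ⟨ofTrivSqZeroExtSection (Ψ.restrictScalars R)
    (Algebra.FormallySmooth.liftOfSurjective_apply _ fst' _ _), fun a => ?_⟩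
  show (Ψ (algebraMap A B a)).snd = D a
  simp [Ψ.commutes, RingHom.algebraMap_toAlgebra]

end Derivation

theorem IsSpecial.of_extends {k : Type} [Field k] {n : ℕ} {K L : Type} [CommRing K] [CommRing L]
    [Algebra k K] [Algebra (MvPowerSeries (Fin n) k) K]
    [IsScalarTower k (MvPowerSeries (Fin n) k) K]
    [Algebra k L] [Algebra (MvPowerSeries (Fin n) k) L]
    [IsScalarTower k (MvPowerSeries (Fin n) k) L]
    [Algebra K L] [IsScalarTower (MvPowerSeries (Fin n) k) K L]
    {M : Type} [AddCommGroup M] [Module k M] [Module K M] [Module L M]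
    [IsScalarTower k K M] [IsScalarTower k L M] [IsScalarTower K L M]
    {D : Derivation k K M} (hD : IsSpecial (n := n) D) {D' : Derivation k L M}
    (hD' : ∀ x, D' (algebraMap K L x) = D x) : IsSpecial (n := n) D' := by
  intro f
  simp only [IsScalarTower.algebraMap_apply (MvPowerSeries (Fin n) k) K L, hD', hD f,
    algebraMap_smul]

/-- for a field extension `K ⊆ L` where `K` is an `R = k⟦x⟧`-algebra,
every special `k`-derivation of `K` into an `L`-module extends to a special
`k`-derivation of `L`; this is the surjectivity of `Der'_k(L,M) → Der'_k(K,M)`,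
equivalent to exactness of `0 → Ω'_{K/k} ⊗_K L → Ω'_{L/k} → Ω_{L/K} → 0`. -/
theorem stmt_8 (k : Type) [Field k] [CharZero k] (n : ℕ) (K L : Type) [Field K] [Field L]
    [Algebra k K] [Algebra (MvPowerSeries (Fin n) k) K]
    [IsScalarTower k (MvPowerSeries (Fin n) k) K]
    [Algebra k L] [Algebra (MvPowerSeries (Fin n) k) L]
    [IsScalarTower k (MvPowerSeries (Fin n) k) L]
    [Algebra K L] [IsScalarTower k K L]
    [IsScalarTower (MvPowerSeries (Fin n) k) K L]
    (M : Type) [AddCommGroup M] [Module k M] [Module K M] [Module L M]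
    [IsScalarTower k K M] [IsScalarTower k L M] [IsScalarTower K L M]
    (D : Derivation k K M) (hD : IsSpecial (n := n) D) :
    ∃ D' : Derivation k L M, IsSpecial (n := n) D' ∧
      ∀ x : K, D' (algebraMap K L x) = D x := by
  have : CharZero K := charZero_of_injective_algebraMap (algebraMap k K).injective
  have := Algebra.FormallySmooth.of_charZero K L
  obtain ⟨D', hD'⟩ := D.exists_extend_of_formallySmooth (B := L)
  exact ⟨D', hD.of_extends hD', hD'⟩
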